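/- Let H ≤ G be a malnormal subgroup of finite index and let S be a generating multiset of G of size [G:H]. Then S is Nielsen equivalent to a left-right transversal of H in G. -/

import Mathlib

open scoped Classical

section Defs

variable {G : Type*} [Group G]

/-- A single Nielsen move on a finite multiset of group elements: replace one
occurrence of `g` by `g⁻¹`, or by `h * g` or `g * h` where `h` is another
occurrence in the multiset. -/
def NielsenMove (S T : Multiset G) : Prop :=
  (∃ g ∈ S, T = g⁻¹ ::ₘ S.erase g) ∨
    (∃ g ∈ S, ∃ h ∈ S.erase g, T = h * g ::ₘ S.erase g ∨ T = g * h ::ₘ S.erase g)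

/-- Nielsen equivalence: one multiset is obtained from the other by a finite
sequence of Nielsen moves. -/
def NielsenEquiv (S T : Multiset G) : Prop :=
  Relation.ReflTransGen NielsenMove S T

/-- The elements of the multiset `S` lie in pairwise distinct left cosets of `H`. -/
def LeftDistinct (H : Subgroup G) (S : Multiset G) : Prop :=
  (S.map fun x => ((x : G) : G ⧸ H)).Nodup

/-- The elements of the multiset `S` lie in pairwise distinct right cosets of `H`
(using that `Hx = Hy ↔ x⁻¹H = y⁻¹H`). -/
def RightDistinct (H : Subgroup G) (S : Multiset G) : Prop :=
  (S.map fun x => ((x⁻¹ : G) : G ⧸ H)).Nodup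

/-- `T` is a left transversal of `H`: it contains exactly one element of each
left coset of `H`. -/
def IsLeftTransversal (H : Subgroup G) (T : Set G) : Prop :=
  ∀ g : G, ∃! t, t ∈ T ∧ ((t : G) : G ⧸ H) = ((g : G) : G ⧸ H)

/-- `T` is a right transversal of `H`: it contains exactly one element of each
right coset of `H` (using that `Hx = Hy ↔ x⁻¹H = y⁻¹H`). -/
def IsRightTransversal (H : Subgroup G) (T : Set G) : Prop :=
  ∀ g : G, ∃! t, t ∈ T ∧ ((t⁻¹ : G) : G ⧸ H) = ((g⁻¹ : G) : G ⧸ H)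

/-- The left coset `aH` as a set. -/
def lcoset (a : G) (H : Subgroup G) : Set G := {x | a⁻¹ * x ∈ H}

/-- The right coset `Ha` as a set. -/
def rcoset (H : Subgroup G) (a : G) : Set G := {x | x * a⁻¹ ∈ H}

/-- The double coset `HgH` as a set. -/
def dcoset (H : Subgroup G) (g : G) : Set G := {x | ∃ h₁ ∈ H, ∃ h₂ ∈ H, x = h₁ * g * h₂}

/-- `S` is left-right clean relative to `H`: `S ∖ H` is nonempty and its elements
lie in pairwise distinct left cosets and pairwise distinct right cosets of `H`. -/
def LeftRightClean (H : Subgroup G) (S : Multiset G) : Prop :=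
  (∃ x ∈ S, x ∉ H) ∧
    LeftDistinct H (S.filter fun x => x ∉ H) ∧
    RightDistinct H (S.filter fun x => x ∉ H)

end Defs

/-!
For `γ ∉ H`, malnormality makes the cosets `hγH` (`h ∈ H`) pairwise distinct and the core of `H`
trivial; so if `H ≠ G` then `G` is finite, `|H| < n = [G : H]` and `|G| = |H| n < 2ⁿ`.

In a group of order `< 2ⁿ` an irredundant generating multiset has fewer than `n` elements. Hence
any generating `n`-multiset can be turned into any other one by exchanging one element at a time:
if the elements already placed are irredundant, some not-yet-replaced element is redundant, and
a Nielsen move replaces it by an arbitrary element.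

It remains to find a generating left-right transversal. Listing `H ∖ {1}` as `h₀, …, hₖ`, the
elements `h₀`, `γ`, `hᵢ₊₁γhᵢ⁻¹` lie in distinct left and distinct right cosets and generate `H`.
They extend greedily to a left-right transversal (a set meeting `HrH` in fewer than `|H|` left
cosets leaves one of the `|H|` right cosets `Hrh` free), which then generates `G`.
-/

open Subgroup

namespace NielsenMove

variable {G : Type*} [Group G] {S T : Multiset G}

theorem cons_inv (g : G) (s : Multiset G) : NielsenMove (g ::ₘ s) (g⁻¹ ::ₘ s) :=
  Or.inl ⟨g, Multiset.mem_cons_self g s, by rw [Multiset.erase_cons_head]⟩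

theorem cons_mul_left {h : G} {s : Multiset G} (hh : h ∈ s) (g : G) :
    NielsenMove (g ::ₘ s) (h * g ::ₘ s) :=
  Or.inr ⟨g, Multiset.mem_cons_self g s, h, by rwa [Multiset.erase_cons_head],
    Or.inl (by rw [Multiset.erase_cons_head])⟩

theorem cons_mul_right {h : G} {s : Multiset G} (hh : h ∈ s) (g : G) :
    NielsenMove (g ::ₘ s) (g * h ::ₘ s) :=
  Or.inr ⟨g, Multiset.mem_cons_self g s, h, by rwa [Multiset.erase_cons_head],
    Or.inr (by rw [Multiset.erase_cons_head])⟩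

theorem cons_cons_inv (g h : G) (s : Multiset G) :
    NielsenMove (g ::ₘ h ::ₘ s) (g ::ₘ h⁻¹ ::ₘ s) := by
  rw [Multiset.cons_swap g h, Multiset.cons_swap g h⁻¹]
  exact cons_inv h _

theorem card_eq (hST : NielsenMove S T) : Multiset.card T = Multiset.card S := by
  rcases hST with ⟨g, hg, rfl⟩ | ⟨g, hg, h, -, rfl | rfl⟩ <;>
    rw [Multiset.card_cons, Multiset.card_erase_add_one hg]

end NielsenMove

namespace NielsenEquiv

variable {G : Type*} [Group G] {S T U : Multiset G}

theorem trans (hST : NielsenEquiv S T) (hTU : NielsenEquiv T U) : NielsenEquiv S U :=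
  Relation.ReflTransGen.trans hST hTU

theorem of_mul_left_cons_cons (g h : G) (s : Multiset G) :
    NielsenEquiv (h * g ::ₘ h ::ₘ s) (g ::ₘ h ::ₘ s) := by
  have h₂ := NielsenMove.cons_mul_left (Multiset.mem_cons_self h⁻¹ s) (h * g)
  have h₃ := NielsenMove.cons_cons_inv g h⁻¹ s
  rw [inv_mul_cancel_left] at h₂
  rw [inv_inv] at h₃
  exact .head (NielsenMove.cons_cons_inv _ h s) (.head h₂ (.single h₃))

theorem of_mul_right_cons_cons (g h : G) (s : Multiset G) :
    NielsenEquiv (g * h ::ₘ h ::ₘ s) (g ::ₘ h ::ₘ s) := by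
  have h₂ := NielsenMove.cons_mul_right (Multiset.mem_cons_self h⁻¹ s) (g * h)
  have h₃ := NielsenMove.cons_cons_inv g h⁻¹ s
  rw [mul_inv_cancel_right] at h₂
  rw [inv_inv] at h₃
  exact .head (NielsenMove.cons_cons_inv _ h s) (.head h₂ (.single h₃))

theorem of_nielsenMove_symm (hST : NielsenMove S T) : NielsenEquiv T S := by
  rcases hST with ⟨g, hg, rfl⟩ | ⟨g, hg, h, hh, rfl | rfl⟩
  · have := NielsenMove.cons_inv g⁻¹ (S.erase g)
    rw [inv_inv, Multiset.cons_erase hg] at this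
    exact .single this
  all_goals
    obtain ⟨s, hs⟩ := Multiset.exists_cons_of_mem hh
    conv_rhs => rw [← Multiset.cons_erase hg]
    rw [hs]
  · exact of_mul_left_cons_cons g h s
  · exact of_mul_right_cons_cons g h s

theorem symm (hST : NielsenEquiv S T) : NielsenEquiv T S := by
  induction hST with
  | refl => exact .refl
  | tail _ hmove ih => exact (of_nielsenMove_symm hmove).trans ih

theorem card_eq (hST : NielsenEquiv S T) : Multiset.card T = Multiset.card S := by
  induction hST with
  | refl => rfl
  | tail _ hmove ih => exact hmove.card_eq.trans ih

theorem cons_mul_of_mem_closure {w : G} {s : Multiset G} (hw : w ∈ closure {x | x ∈ s})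
    (g : G) : NielsenEquiv (g ::ₘ s) (w * g ::ₘ s) := by
  induction hw using closure_induction generalizing g with
  | mem x hx => exact .single (NielsenMove.cons_mul_left hx g)
  | one => rw [one_mul]; exact .refl
  | mul w₁ w₂ _ _ ih₁ ih₂ => simpa only [mul_assoc] using (ih₂ g).trans (ih₁ (w₂ * g))
  | inv w _ ih => simpa only [mul_inv_cancel_left] using (ih (w⁻¹ * g)).symm

theorem cons_of_closure_eq_top {s : Multiset G} (hs : closure {x | x ∈ s} = ⊤) (g g' : G) :
    NielsenEquiv (g ::ₘ s) (g' ::ₘ s) := by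
  have := cons_mul_of_mem_closure (hs ▸ mem_top (g' * g⁻¹)) g
  rwa [inv_mul_cancel_right] at this

end NielsenEquiv

section Irredundant

variable {G : Type*} [Group G]

def Irredundant (S : Multiset G) : Prop :=
  ∀ x ∈ S, x ∉ closure {y | y ∈ S.erase x}

theorem closure_erase_eq_of_mem_closure {S : Multiset G} {x : G}
    (hx : x ∈ closure {y | y ∈ S.erase x}) :
    closure {y | y ∈ S.erase x} = closure {y | y ∈ S} := by
  refine le_antisymm (closure_mono fun y hy => Multiset.mem_of_mem_erase hy) (closure_le _ |>.2 ?_)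
  intro y hy
  by_cases hyx : y = x
  · exact hyx ▸ hx
  · exact subset_closure ((Multiset.mem_erase_of_ne hyx).2 hy)

theorem closure_eq_top_of_subset {S T : Multiset G} (hST : S ⊆ T)
    (hS : closure {x | x ∈ S} = ⊤) : closure {x | x ∈ T} = ⊤ :=
  top_unique (hS ▸ closure_mono hST)

theorem Irredundant.mono {S T : Multiset G} (hT : Irredundant T) (hST : S ≤ T) :
    Irredundant S := fun x hx hmem =>
  hT x (Multiset.mem_of_le hST hx)
    (closure_mono (fun _ hy => Multiset.mem_of_le (Multiset.erase_le_erase x hST) hy) hmem)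

theorem exists_le_irredundant (S : Multiset G) :
    ∃ T ≤ S, Irredundant T ∧ closure {x | x ∈ T} = closure {x | x ∈ S} := by
  induction S using Multiset.strongInductionOn with
  | ih S ih =>
    by_cases hS : Irredundant S
    · exact ⟨S, le_rfl, hS, rfl⟩
    obtain ⟨x, hx, hmem⟩ : ∃ x ∈ S, x ∈ closure {y | y ∈ S.erase x} := by
      simpa [Irredundant] using hS
    obtain ⟨T, hT, hTirr, hTcl⟩ := ih _ (Multiset.erase_lt.2 hx)
    exact ⟨T, hT.trans (Multiset.erase_le x S), hTirr,
      hTcl.trans (closure_erase_eq_of_mem_closure hmem)⟩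

theorem two_mul_card_le_of_lt [Finite G] {K L : Subgroup G} (h : K < L) :
    2 * Nat.card K ≤ Nat.card L := by
  obtain ⟨m, hm⟩ := card_dvd_of_le h.le
  have hm0 : m ≠ 0 := by
    rintro rfl
    exact Nat.card_pos.ne' (hm.trans (mul_zero _))
  have hm1 : m ≠ 1 := by
    rintro rfl
    exact h.ne (eq_of_le_of_card_ge h.le (by rw [hm, mul_one]))
  calc 2 * Nat.card K ≤ m * Nat.card K := Nat.mul_le_mul_right _ (by omega)
    _ = Nat.card L := by rw [hm, mul_comm]

theorem two_pow_card_add_le [Finite G] {A U : Multiset G}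
    (hA : 2 ^ Multiset.card A ≤ Nat.card (closure {x | x ∈ A}))
    (hU : ∀ u ∈ U, u ∉ closure {y | y ∈ A + U.erase u}) :
    2 ^ Multiset.card (A + U) ≤ Nat.card (closure {x | x ∈ A + U}) := by
  induction U using Multiset.induction_on with
  | empty => simpa using hA
  | cons u U ih =>
    have hu : u ∉ closure {y | y ∈ A + U} := by
      simpa using hU u (Multiset.mem_cons_self u U)
    have hle : 2 ^ Multiset.card (A + U) ≤ Nat.card (closure {x | x ∈ A + U}) := by
      refine ih fun v hv hmem => hU v (Multiset.mem_cons_of_mem hv) (closure_mono ?_ hmem)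
      exact Multiset.subset_of_le
        (add_le_add_right (Multiset.erase_le_erase v (Multiset.le_cons_self U u)) A)
    have hlt : closure {x | x ∈ A + U} < closure {x | x ∈ A + u ::ₘ U} := by
      refine lt_of_le_of_ne (closure_mono ?_) fun h => hu (h ▸ subset_closure (by simp))
      rw [Multiset.add_cons]
      exact Multiset.subset_cons _ _
    rw [Multiset.add_cons, Multiset.card_cons, pow_succ, ← Multiset.add_cons]
    linarith [two_mul_card_le_of_lt hlt]

theorem Irredundant.two_pow_card_le [Finite G] {S : Multiset G} (hS : Irredundant S) :
    2 ^ Multiset.card S ≤ Nat.card (closure {x | x ∈ S}) := by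
  simpa using two_pow_card_add_le (A := 0) (by simp) fun u hu => by simpa using hS u hu

theorem exists_closure_add_erase_eq_top [Finite G] {A U : Multiset G} (hA : Irredundant A)
    (htop : closure {x | x ∈ A + U} = ⊤) (hG : Nat.card G < 2 ^ Multiset.card (A + U)) :
    ∃ u ∈ U, closure {x | x ∈ A + U.erase u} = ⊤ := by
  by_contra! h
  have hU : ∀ u ∈ U, u ∉ closure {y | y ∈ A + U.erase u} := by
    intro u hu hmem
    rw [← Multiset.erase_add_right_pos A hu] at hmem
    apply h u hu
    rw [← Multiset.erase_add_right_pos A hu, closure_erase_eq_of_mem_closure hmem, htop]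
  have := two_pow_card_add_le hA.two_pow_card_le hU
  rw [htop, card_top] at this
  omega

theorem exists_nielsenEquiv_add_of_irredundant [Finite G] {A D U : Multiset G}
    (hAD : Irredundant (A + D)) (htop : closure {x | x ∈ A + U} = ⊤)
    (hG : Nat.card G < 2 ^ Multiset.card (A + U)) : ∃ V, NielsenEquiv (A + U) (A + D + V) := by
  induction D using Multiset.induction_on generalizing A U with
  | empty => exact ⟨U, by rw [add_zero]; exact .refl⟩
  | cons t D ih =>
    obtain ⟨u, hu, hutop⟩ :=
      exists_closure_add_erase_eq_top (hAD.mono (Multiset.le_add_right A _)) htop hG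
    have hU : U = u ::ₘ U.erase u := (Multiset.cons_erase hu).symm
    have hstep : NielsenEquiv (A + U) (t ::ₘ A + U.erase u) := by
      rw [hU, Multiset.add_cons, Multiset.erase_cons_head, Multiset.cons_add]
      exact NielsenEquiv.cons_of_closure_eq_top hutop u t
    have htop' : closure {x | x ∈ t ::ₘ A + U.erase u} = ⊤ := by
      rw [Multiset.cons_add]
      exact closure_eq_top_of_subset (Multiset.subset_cons _ _) hutop
    have hcard : Multiset.card (t ::ₘ A + U.erase u) = Multiset.card (A + U) := by
      conv_rhs => rw [hU]
      simp only [Multiset.card_add, Multiset.card_cons]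
      omega
    obtain ⟨V, hV⟩ := ih (by rwa [Multiset.cons_add, ← Multiset.add_cons]) htop' (hcard ▸ hG)
    refine ⟨V, hstep.trans ?_⟩
    rwa [Multiset.cons_add t A D, ← Multiset.add_cons t A D] at hV

theorem nielsenEquiv_add_of_closure_eq_top {A U V : Multiset G} (hA : closure {x | x ∈ A} = ⊤)
    (hcard : Multiset.card U = Multiset.card V) : NielsenEquiv (A + U) (A + V) := by
  induction U using Multiset.induction_on generalizing A V with
  | empty =>
    rw [Multiset.card_eq_zero.1 hcard.symm]
    exact .refl
  | cons u U ih =>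
    obtain ⟨v, hv⟩ := Multiset.card_pos_iff_exists_mem.1 (by rw [← hcard]; simp)
    have hAU : closure {x | x ∈ A + U} = ⊤ :=
      closure_eq_top_of_subset (Multiset.subset_of_le (Multiset.le_add_right A U)) hA
    have hvA : closure {x | x ∈ v ::ₘ A} = ⊤ :=
      closure_eq_top_of_subset (Multiset.subset_cons _ _) hA
    have hstep : NielsenEquiv (A + u ::ₘ U) (v ::ₘ A + U) := by
      rw [Multiset.add_cons, Multiset.cons_add]
      exact NielsenEquiv.cons_of_closure_eq_top hAU u v
    have hrest := ih hvA (V := V.erase v) (by simp [Multiset.card_erase_of_mem hv, ← hcard])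
    rw [Multiset.cons_add v A (V.erase v), ← Multiset.add_cons, Multiset.cons_erase hv] at hrest
    exact hstep.trans hrest

theorem NielsenEquiv.of_closure_eq_top [Finite G] {S T : Multiset G}
    (hS : closure {x | x ∈ S} = ⊤) (hT : closure {x | x ∈ T} = ⊤)
    (hcard : Multiset.card S = Multiset.card T) (hG : Nat.card G < 2 ^ Multiset.card S) :
    NielsenEquiv S T := by
  obtain ⟨T₀, hT₀T, hT₀, hT₀top⟩ := exists_le_irredundant T
  obtain ⟨T₁, rfl⟩ := Multiset.le_iff_exists_add.1 hT₀T
  obtain ⟨V, hV⟩ := exists_nielsenEquiv_add_of_irredundant (A := 0) (D := T₀) (U := S)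
    (by rwa [zero_add]) (by rwa [zero_add]) (by rwa [zero_add])
  rw [zero_add, zero_add] at hV
  have hVcard := hV.card_eq
  refine hV.trans (nielsenEquiv_add_of_closure_eq_top (hT₀top.trans hT) ?_)
  simp only [Multiset.card_add] at hVcard hcard
  omega

end Irredundant

section Counting

variable {α β : Type*}

theorem Multiset.card_le_natCard_of_subset_range [Finite α] {f : α → β} {S : Multiset β}
    (hS : S.Nodup) (hSf : ∀ b ∈ S, b ∈ Set.range f) : Multiset.card S ≤ Nat.card α := by
  have := Fintype.ofFinite α
  rw [← Multiset.toFinset_card_of_nodup hS, Nat.card_eq_fintype_card, ← Finset.card_univ]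
  refine (Finset.card_le_card (t := Finset.univ.image f) fun b hb => ?_).trans Finset.card_image_le
  obtain ⟨a, rfl⟩ := hSf b (Multiset.mem_toFinset.1 hb)
  exact Finset.mem_image_of_mem f (Finset.mem_univ a)

theorem Multiset.exists_apply_notMem_of_card_lt [Finite α] {f : α → β}
    (hf : Function.Injective f) {S : Multiset β} (hS : Multiset.card S < Nat.card α) :
    ∃ a, f a ∉ S := by
  have := Fintype.ofFinite α
  by_contra! h
  rw [Nat.card_eq_fintype_card, ← Finset.card_univ,
    ← Finset.card_image_of_injective _ hf] at hS
  have himage : Finset.univ.image f ⊆ S.toFinset := fun b hb => by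
    obtain ⟨a, -, rfl⟩ := Finset.mem_image.1 hb
    exact Multiset.mem_toFinset.2 (h a)
  exact (hS.trans_le ((Finset.card_le_card himage).trans (Multiset.toFinset_card_le S))).false

theorem Multiset.existsUnique_of_nodup_map [Finite β] {f : α → β} {S : Multiset α}
    (hS : (S.map f).Nodup) (hcard : Multiset.card S = Nat.card β) (b : β) :
    ∃! a, a ∈ S ∧ f a = b := by
  obtain ⟨a, ha, rfl⟩ : ∃ a ∈ S, f a = b := by
    rw [← Multiset.mem_map]
    by_contra hb
    have := Multiset.card_le_natCard_of_subset_range (f := id) (Multiset.nodup_cons.2 ⟨hb, hS⟩)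
      fun c _ => ⟨c, rfl⟩
    simp [hcard] at this
  exact ⟨a, ⟨ha, rfl⟩, fun a' ha' => Multiset.inj_on_of_nodup_map hS a' ha'.1 a ha ha'.2⟩

end Counting

section Transversal

variable {G : Type*} [Group G] {H : Subgroup G} {S : Multiset G}

theorem isLeftTransversal_of_leftDistinct [H.FiniteIndex] (hS : LeftDistinct H S)
    (hcard : Multiset.card S = H.index) : IsLeftTransversal H {x | x ∈ S} :=
  fun _ => Multiset.existsUnique_of_nodup_map hS hcard _

theorem isRightTransversal_of_rightDistinct [H.FiniteIndex] (hS : RightDistinct H S)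
    (hcard : Multiset.card S = H.index) : IsRightTransversal H {x | x ∈ S} :=
  fun _ => Multiset.existsUnique_of_nodup_map hS hcard _

theorem closure_eq_top_of_isLeftTransversal (hS : IsLeftTransversal H {x | x ∈ S})
    (hH : H ≤ closure {x | x ∈ S}) : closure {x | x ∈ S} = ⊤ := by
  refine eq_top_iff.2 fun g _ => ?_
  obtain ⟨t, ⟨ht, htg⟩, -⟩ := hS g
  simpa using mul_mem (subset_closure ht) (hH (QuotientGroup.eq.1 htg))

end Transversal

theorem Nat.mul_sub_one_lt_two_pow : ∀ n : ℕ, n * (n - 1) < 2 ^ n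
  | 0 => by simp
  | n + 1 => by
    have ih := Nat.mul_sub_one_lt_two_pow n
    have := Nat.lt_two_pow_self (n := n - 1)
    rcases n with _ | n
    · simp
    · simp only [Nat.add_sub_cancel] at ih this ⊢
      rw [pow_succ, pow_succ] at *
      nlinarith

section Cosets

variable {G : Type*} [Group G] {H : Subgroup G}

theorem mul_mul_notMem {a b γ : G} (ha : a ∈ H) (hb : b ∈ H) (hγ : γ ∉ H) : a * γ * b ∉ H :=
  fun h => hγ ((H.mul_mem_cancel_left ha).1 ((H.mul_mem_cancel_right hb).1 h))

theorem card_filter_mem_dcoset_lt [Finite G] {P : Multiset G} (hP : LeftDistinct H P) {r : G}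
    (hr : (r : G ⧸ H) ∉ P.map ((↑) : G → G ⧸ H)) :
    Multiset.card (P.filter (· ∈ dcoset H r)) < Nat.card H := by
  set D := P.filter (· ∈ dcoset H r)
  have hD : D.map ((↑) : G → G ⧸ H) ≤ P.map (↑) := Multiset.map_le_map (Multiset.filter_le _ P)
  have hnodup : ((r : G ⧸ H) ::ₘ D.map (↑)).Nodup :=
    Multiset.nodup_cons.2 ⟨fun h => hr (Multiset.mem_of_le hD h), Multiset.nodup_of_le hD hP⟩
  have hrange : ∀ q ∈ (r : G ⧸ H) ::ₘ D.map (↑),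
      q ∈ Set.range fun h : H => ((h * r : G) : G ⧸ H) := by
    intro q hq
    rcases Multiset.mem_cons.1 hq with rfl | hq
    · exact ⟨1, by simp⟩
    obtain ⟨p, hp, rfl⟩ := Multiset.mem_map.1 hq
    obtain ⟨h₁, hh₁, h₂, hh₂, rfl⟩ := (Multiset.mem_filter.1 hp).2
    exact Set.mem_range.2 ⟨⟨h₁, hh₁⟩, (QuotientGroup.mk_mul_of_mem _ hh₂).symm⟩
  simpa using Multiset.card_le_natCard_of_subset_range hnodup hrange

end Cosets

namespace List

variable {α : Type*}

theorem map_snd_zip_sublist {β : Type*} :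
    ∀ (l₁ : List α) (l₂ : List β), ((l₁.zip l₂).map Prod.snd).Sublist l₂
  | [], _ => by simp
  | _ :: _, [] => by simp
  | _ :: l₁, b :: l₂ => by simpa using (map_snd_zip_sublist l₁ l₂).cons_cons b

theorem Nodup.map_fst_cons_zip_tail {l : List α} (hl : l.Nodup) {a : α} (ha : a ∉ l) :
    (((a, a) :: l.tail.zip l).map Prod.fst).Nodup := by
  rw [map_cons, map_fst_zip (by simp), nodup_cons]
  exact ⟨fun h => ha (tail_subset l h), hl.sublist (tail_sublist l)⟩

theorem Nodup.map_snd_cons_zip_tail {l : List α} (hl : l.Nodup) {a : α} (ha : a ∉ l) :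
    (((a, a) :: l.tail.zip l).map Prod.snd).Nodup :=
  (nodup_cons.2 ⟨ha, hl⟩).sublist ((map_snd_zip_sublist _ _).cons_cons a)

end List

section Chain

variable {G : Type*} [Group G]

theorem forall_mem_of_chain_mem {K : Subgroup G} {γ : G} (hγ : γ ∈ K) :
    ∀ {hs : List G}, hs.headD 1 ∈ K → (∀ p ∈ hs.tail.zip hs, p.1 * γ * p.2⁻¹ ∈ K) →
      ∀ h ∈ hs, h ∈ K
  | [], _, _ => by simp
  | [_], hh, _ => by simpa using hh
  | h :: h' :: t, hh, hzip => by
    have hh' : h' ∈ K := by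
      simpa using mul_mem (mul_mem (hzip (h', h) (by simp)) hh) (inv_mem hγ)
    intro x hx
    rcases List.mem_cons.1 hx with rfl | hx
    · exact hh
    · refine forall_mem_of_chain_mem hγ (hs := h' :: t) hh' (fun p hp => hzip p ?_) x hx
      simpa using Or.inr hp

/-- For `hs = [h₀, …, hₖ]`: the elements `h₀`, `γ` (from the pair `(1, 1)`) and `hᵢ₊₁γhᵢ⁻¹`. -/
def chainGenerators (γ : G) (hs : List G) : Multiset G :=
  hs.headD 1 ::ₘ (((1, 1) :: hs.tail.zip hs : List (G × G)) : Multiset (G × G)).map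
    fun p => p.1 * γ * p.2⁻¹

theorem card_chainGenerators_le (γ : G) (hs : List G) :
    Multiset.card (chainGenerators γ hs) ≤ hs.length + 2 := by
  simp only [chainGenerators, Multiset.card_cons, Multiset.card_map, Multiset.coe_card,
    List.length_cons, List.length_zip, List.length_tail]
  omega

theorem mem_closure_chainGenerators (γ : G) (hs : List G) :
    ∀ h ∈ hs, h ∈ closure {x | x ∈ chainGenerators γ hs} := by
  have hmem : ∀ p ∈ ((1, 1) :: hs.tail.zip hs : List (G × G)),
      p.1 * γ * p.2⁻¹ ∈ closure {x | x ∈ chainGenerators γ hs} := fun p hp =>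
    subset_closure <| Multiset.mem_cons_of_mem <|
      Multiset.mem_map_of_mem (fun p : G × G => p.1 * γ * p.2⁻¹) (Multiset.mem_coe.2 hp)
  exact forall_mem_of_chain_mem (by simpa using hmem (1, 1) List.mem_cons_self)
    (subset_closure (Multiset.mem_cons_self _ _ : hs.headD 1 ∈ chainGenerators γ hs))
    fun p hp => hmem p (List.mem_cons_of_mem _ hp)

theorem headD_mem_of_forall_mem {H : Subgroup G} {hs : List G}
    (hhs : ∀ h ∈ hs, h ∈ H) : hs.headD 1 ∈ H := by
  cases hs <;> simp_all

theorem forall_mem_cons_zip_tail {H : Subgroup G} {hs : List G}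
    (hhs : ∀ h ∈ hs, h ∈ H) :
    ∀ p ∈ ((1, 1) :: hs.tail.zip hs : List (G × G)), p.1 ∈ H ∧ p.2 ∈ H := by
  rintro ⟨a, b⟩ hp
  rcases List.mem_cons.1 hp with hp | hp
  · simp_all
  · exact ⟨hhs a (List.tail_subset _ (List.of_mem_zip hp).1), hhs b (List.of_mem_zip hp).2⟩

end Chain

section Malnormal

variable {G : Type*} [Group G] {H : Subgroup G}

def IsMalnormal (H : Subgroup G) : Prop :=
  ∀ g : G, g ∉ H → ∀ x ∈ H, g * x * g⁻¹ ∈ H → x = 1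

namespace IsMalnormal

variable (hH : IsMalnormal H)
include hH

section Conjugator

variable {γ : G} (hγ : γ ∉ H)
include hγ

theorem eq_one_of_inv_mul_mul_mem {x : G} (hx : x ∈ H) (h : γ⁻¹ * x * γ ∈ H) : x = 1 :=
  hH γ⁻¹ (inv_mem_iff.not.2 hγ) x hx (by rwa [inv_inv])

theorem mk_mul_mul_eq_mk_iff {a b a' b' : G} (ha : a ∈ H) (hb : b ∈ H) (ha' : a' ∈ H)
    (hb' : b' ∈ H) : ((a * γ * b : G) : G ⧸ H) = ((a' * γ * b' : G) : G ⧸ H) ↔ a = a' := by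
  rw [QuotientGroup.eq]
  constructor
  · intro h
    have hconj : γ⁻¹ * (a⁻¹ * a') * γ ∈ H := by
      have := mul_mem (mul_mem hb h) (inv_mem hb')
      simpa only [mul_inv_rev, mul_assoc, mul_inv_cancel_left, mul_inv_cancel, mul_one] using this
    exact inv_mul_eq_one.1 (hH.eq_one_of_inv_mul_mul_mem hγ (mul_mem (inv_mem ha) ha') hconj)
  · rintro rfl
    simpa only [mul_inv_rev, mul_assoc, inv_mul_cancel_left] using mul_mem (inv_mem hb) hb'

theorem mk_inv_eq_mk_inv_iff {a b a' b' : G} (ha : a ∈ H) (hb : b ∈ H) (ha' : a' ∈ H)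
    (hb' : b' ∈ H) :
    (((a * γ * b)⁻¹ : G) : G ⧸ H) = (((a' * γ * b')⁻¹ : G) : G ⧸ H) ↔ b = b' := by
  have hγ' : γ⁻¹ ∉ H := inv_mem_iff.not.2 hγ
  simp only [mul_inv_rev, ← mul_assoc]
  rw [hH.mk_mul_mul_eq_mk_iff hγ' (inv_mem hb) (inv_mem ha) (inv_mem hb') (inv_mem ha'), inv_inj]

theorem leftDistinct_cons_map {x₀ : G} (hx₀ : x₀ ∈ H) {Q : Multiset (G × G)}
    (hQ : ∀ p ∈ Q, p.1 ∈ H ∧ p.2 ∈ H) (hQ₁ : (Q.map Prod.fst).Nodup) :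
    LeftDistinct H (x₀ ::ₘ Q.map fun p => p.1 * γ * p.2⁻¹) := by
  rw [LeftDistinct, Multiset.map_cons, Multiset.nodup_cons, Multiset.map_map]
  refine ⟨fun hmem => ?_, Multiset.Nodup.map_on (fun p hp q hq hpq => ?_) (hQ₁.of_map _)⟩
  · obtain ⟨p, hp, hpx⟩ := Multiset.mem_map.1 hmem
    rw [Function.comp_apply, QuotientGroup.eq, H.mul_mem_cancel_right hx₀, inv_mem_iff] at hpx
    exact mul_mul_notMem (hQ p hp).1 (inv_mem (hQ p hp).2) hγ hpx
  · exact Multiset.inj_on_of_nodup_map hQ₁ p hp q hq <|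
      (hH.mk_mul_mul_eq_mk_iff hγ (hQ p hp).1 (inv_mem (hQ p hp).2) (hQ q hq).1
        (inv_mem (hQ q hq).2)).1 hpq

theorem rightDistinct_cons_map {x₀ : G} (hx₀ : x₀ ∈ H) {Q : Multiset (G × G)}
    (hQ : ∀ p ∈ Q, p.1 ∈ H ∧ p.2 ∈ H) (hQ₂ : (Q.map Prod.snd).Nodup) :
    RightDistinct H (x₀ ::ₘ Q.map fun p => p.1 * γ * p.2⁻¹) := by
  rw [RightDistinct, Multiset.map_cons, Multiset.nodup_cons, Multiset.map_map]
  refine ⟨fun hmem => ?_, Multiset.Nodup.map_on (fun p hp q hq hpq => ?_) (hQ₂.of_map _)⟩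
  · obtain ⟨p, hp, hpx⟩ := Multiset.mem_map.1 hmem
    rw [Function.comp_apply, QuotientGroup.eq, H.mul_mem_cancel_right (inv_mem hx₀), inv_mem_iff,
      inv_mem_iff] at hpx
    exact mul_mul_notMem (hQ p hp).1 (inv_mem (hQ p hp).2) hγ hpx
  · exact Multiset.inj_on_of_nodup_map hQ₂ p hp q hq <| inv_inj.1 <|
      (hH.mk_inv_eq_mk_inv_iff hγ (hQ p hp).1 (inv_mem (hQ p hp).2) (hQ q hq).1
        (inv_mem (hQ q hq).2)).1 hpq

theorem leftDistinct_chainGenerators {hs : List G} (hnd : hs.Nodup) (hhs : ∀ h ∈ hs, h ∈ H)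
    (hs1 : 1 ∉ hs) : LeftDistinct H (chainGenerators γ hs) :=
  hH.leftDistinct_cons_map hγ (headD_mem_of_forall_mem hhs)
    (fun p hp => forall_mem_cons_zip_tail hhs p (Multiset.mem_coe.1 hp))
    (by rw [Multiset.map_coe, Multiset.coe_nodup]; exact hnd.map_fst_cons_zip_tail hs1)

theorem rightDistinct_chainGenerators {hs : List G} (hnd : hs.Nodup) (hhs : ∀ h ∈ hs, h ∈ H)
    (hs1 : 1 ∉ hs) : RightDistinct H (chainGenerators γ hs) :=
  hH.rightDistinct_cons_map hγ (headD_mem_of_forall_mem hhs)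
    (fun p hp => forall_mem_cons_zip_tail hhs p (Multiset.mem_coe.1 hp))
    (by rw [Multiset.map_coe, Multiset.coe_nodup]; exact hnd.map_snd_cons_zip_tail hs1)

end Conjugator

theorem normalCore_eq_bot (hne : H ≠ ⊤) : H.normalCore = ⊥ := by
  obtain ⟨γ, hγ⟩ := SetLike.exists_not_mem_of_ne_top H hne
  refine (Subgroup.eq_bot_iff_forall _).2 fun x hx => hH γ hγ x (H.normalCore_le hx) ?_
  exact H.normalCore_le ((H.normalCore_normal).conj_mem x hx γ)

theorem finite [H.FiniteIndex] (hne : H ≠ ⊤) : Finite G := by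
  have : (⊥ : Subgroup G).FiniteIndex := hH.normalCore_eq_bot hne ▸ inferInstance
  exact Nat.finite_of_card_ne_zero (index_bot (G := G) ▸ FiniteIndex.index_ne_zero)

section Finite

variable [Finite G]

theorem card_lt_index (hne : H ≠ ⊤) : Nat.card H < H.index := by
  obtain ⟨γ, hγ⟩ := SetLike.exists_not_mem_of_ne_top H hne
  have := Fintype.ofFinite G
  have hinj : Function.Injective fun h : H => ((h * γ * 1 : G) : G ⧸ H) := fun h h' hhh' =>
    Subtype.ext ((hH.mk_mul_mul_eq_mk_iff hγ h.2 H.one_mem h'.2 H.one_mem).1 hhh')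
  have hmiss : ((1 : G) : G ⧸ H) ∉ Set.range fun h : H => ((h * γ * 1 : G) : G ⧸ H) := by
    rintro ⟨h, hh⟩
    refine hγ ((H.mul_mem_cancel_left h.2).1 ?_)
    simpa using QuotientGroup.eq.1 hh.symm
  simpa only [Nat.card_eq_fintype_card, index] using
    Fintype.card_lt_of_injective_of_notMem _ hinj hmiss

theorem card_lt_two_pow_index (hne : H ≠ ⊤) : Nat.card G < 2 ^ H.index := by
  have hle : Nat.card H ≤ H.index - 1 := Nat.le_sub_one_of_lt (hH.card_lt_index hne)
  calc Nat.card G = Nat.card H * H.index := (card_mul_index H).symm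
    _ ≤ (H.index - 1) * H.index := Nat.mul_le_mul_right _ hle
    _ = H.index * (H.index - 1) := mul_comm _ _
    _ < 2 ^ H.index := Nat.mul_sub_one_lt_two_pow _

theorem exists_mk_inv_mul_notMem {P : Multiset G}
    (hP : LeftDistinct H P) {r : G} (hrH : r ∉ H) (hr : (r : G ⧸ H) ∉ P.map ((↑) : G → G ⧸ H)) :
    ∃ h ∈ H, (((r * h)⁻¹ : G) : G ⧸ H) ∉ P.map fun x => ((x⁻¹ : G) : G ⧸ H) := by
  have hinj : Function.Injective fun h : H => (((1 * r * h)⁻¹ : G) : G ⧸ H) := fun h h' hhh' =>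
    Subtype.ext ((hH.mk_inv_eq_mk_inv_iff hrH H.one_mem h.2 H.one_mem h'.2).1 hhh')
  obtain ⟨⟨h, hh⟩, hnot⟩ := Multiset.exists_apply_notMem_of_card_lt hinj
    (S := (P.filter (· ∈ dcoset H r)).map fun x => ((x⁻¹ : G) : G ⧸ H))
    (by simpa using card_filter_mem_dcoset_lt hP hr)
  refine ⟨h, hh, fun hmem => hnot ?_⟩
  obtain ⟨p, hp, hpr⟩ := Multiset.mem_map.1 hmem
  have hpH : p * (r * h)⁻¹ ∈ H := by simpa using QuotientGroup.eq.1 hpr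
  refine Multiset.mem_map.2 ⟨p, Multiset.mem_filter.2 ⟨hp, ?_⟩, by simpa using hpr⟩
  exact ⟨p * (r * h)⁻¹, hpH, h, hh, by group⟩

theorem exists_leftDistinct_rightDistinct_cons
    {P : Multiset G} (hL : LeftDistinct H P) (hR : RightDistinct H P) (hPH : ∃ x ∈ P, x ∈ H)
    (hcard : Multiset.card P < H.index) :
    ∃ w, LeftDistinct H (w ::ₘ P) ∧ RightDistinct H (w ::ₘ P) := by
  obtain ⟨q, hq⟩ := Multiset.exists_apply_notMem_of_card_lt Function.injective_id
    (S := P.map ((↑) : G → G ⧸ H)) (by simpa [index] using hcard)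
  obtain ⟨r, rfl⟩ := QuotientGroup.mk_surjective q
  have hrH : r ∉ H := fun hr => by
    obtain ⟨x, hx, hxH⟩ := hPH
    exact hq (Multiset.mem_map.2 ⟨x, hx, QuotientGroup.eq.2 (mul_mem (inv_mem hxH) hr)⟩)
  obtain ⟨h, hh, hnot⟩ := hH.exists_mk_inv_mul_notMem hL hrH hq
  refine ⟨r * h, ?_, ?_⟩
  · rw [LeftDistinct, Multiset.map_cons, QuotientGroup.mk_mul_of_mem r hh]
    exact Multiset.nodup_cons.2 ⟨hq, hL⟩
  · rw [RightDistinct, Multiset.map_cons]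
    exact Multiset.nodup_cons.2 ⟨hnot, hR⟩

theorem exists_le_leftDistinct_rightDistinct {P : Multiset G}
    (hL : LeftDistinct H P) (hR : RightDistinct H P) (hPH : ∃ x ∈ P, x ∈ H)
    (hcard : Multiset.card P ≤ H.index) :
    ∃ T, P ≤ T ∧ Multiset.card T = H.index ∧ LeftDistinct H T ∧ RightDistinct H T := by
  induction hk : H.index - Multiset.card P generalizing P with
  | zero => exact ⟨P, le_rfl, by omega, hL, hR⟩
  | succ k ih =>
    obtain ⟨w, hwL, hwR⟩ :=
      hH.exists_leftDistinct_rightDistinct_cons hL hR hPH (by omega)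
    obtain ⟨T, hT, hTcard, hTL, hTR⟩ := ih hwL hwR
      (hPH.imp fun x hx => ⟨Multiset.mem_cons_of_mem hx.1, hx.2⟩)
      (by rw [Multiset.card_cons]; omega) (by rw [Multiset.card_cons]; omega)
    exact ⟨T, (Multiset.le_cons_self P w).trans hT, hTcard, hTL, hTR⟩

theorem exists_leftDistinct_rightDistinct_le_closure (hne : H ≠ ⊤) :
    ∃ P : Multiset G, LeftDistinct H P ∧ RightDistinct H P ∧ (∃ x ∈ P, x ∈ H) ∧
      Multiset.card P ≤ H.index ∧ H ≤ closure {x | x ∈ P} := by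
  have := Fintype.ofFinite G
  obtain ⟨γ, hγ⟩ := SetLike.exists_not_mem_of_ne_top H hne
  set hs := ((H : Set G).toFinset.erase 1).toList
  have hnd : hs.Nodup := Finset.nodup_toList _
  have hsH : ∀ h ∈ hs, h ∈ H := fun h hh => by simp_all [hs]
  have hs1 : (1 : G) ∉ hs := by simp [hs]
  have hslen : hs.length + 1 = Nat.card H := by
    have h1 : (1 : G) ∈ (H : Set G).toFinset := by simp
    rw [Finset.length_toList, Finset.card_erase_of_mem h1, ← Nat.card_eq_card_toFinset]
    exact Nat.sub_add_cancel Nat.card_pos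
  refine ⟨chainGenerators γ hs, hH.leftDistinct_chainGenerators hγ hnd hsH hs1,
    hH.rightDistinct_chainGenerators hγ hnd hsH hs1,
    ⟨_, Multiset.mem_cons_self _ _, headD_mem_of_forall_mem hsH⟩, ?_, fun h hh => ?_⟩
  · have := card_chainGenerators_le γ hs
    have := hH.card_lt_index hne
    omega
  by_cases h1 : h = 1
  · exact h1 ▸ one_mem _
  exact mem_closure_chainGenerators γ hs h (by simp [hs, hh, h1])

theorem exists_leftDistinct_rightDistinct_closure_eq_top (hne : H ≠ ⊤) :
    ∃ T : Multiset G, Multiset.card T = H.index ∧ LeftDistinct H T ∧ RightDistinct H T ∧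
      closure {x | x ∈ T} = ⊤ := by
  obtain ⟨P, hPL, hPR, hPH, hPcard, hPcl⟩ := hH.exists_leftDistinct_rightDistinct_le_closure hne
  obtain ⟨T, hPT, hTcard, hTL, hTR⟩ :=
    hH.exists_le_leftDistinct_rightDistinct hPL hPR hPH hPcard
  refine ⟨T, hTcard, hTL, hTR, closure_eq_top_of_isLeftTransversal
    (isLeftTransversal_of_leftDistinct hTL hTcard) ?_⟩
  exact hPcl.trans (closure_mono fun x hx => Multiset.mem_of_le hPT hx)

end Finite

end IsMalnormal

end Malnormal

/-- if `H ≤ G` is malnormal of finite index and `S` is a generating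
multiset of size `[G:H]`, then `S` is Nielsen equivalent to a left-right
transversal of `H` in `G`. -/
theorem stmt3 {G : Type*} [Group G] (H : Subgroup G) [H.FiniteIndex]
    (hmal : ∀ g : G, g ∉ H → ∀ x ∈ H, g * x * g⁻¹ ∈ H → x = 1)
    (S : Multiset G) (hcard : S.card = H.index)
    (hgen : Subgroup.closure {x : G | x ∈ S} = ⊤) :
    ∃ S' : Multiset G, NielsenEquiv S S' ∧ LeftDistinct H S' ∧ RightDistinct H S' ∧
      IsLeftTransversal H {x : G | x ∈ S'} ∧ IsRightTransversal H {x : G | x ∈ S'} := by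
  have hH : IsMalnormal H := hmal
  obtain ⟨T, hST, hTcard, hTL, hTR⟩ : ∃ T, NielsenEquiv S T ∧ Multiset.card T = H.index ∧
      LeftDistinct H T ∧ RightDistinct H T := by
    by_cases hne : H = ⊤
    · subst hne
      rw [index_top] at hcard
      obtain ⟨a, rfl⟩ := Multiset.card_eq_one.1 hcard
      exact ⟨{a}, .refl, by simp, by simp [LeftDistinct], by simp [RightDistinct]⟩
    have := hH.finite hne
    obtain ⟨T, hTcard, hTL, hTR, hTgen⟩ :=
      hH.exists_leftDistinct_rightDistinct_closure_eq_top hne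
    refine ⟨T, .of_closure_eq_top hgen hTgen (hcard.trans hTcard.symm) ?_, hTcard, hTL, hTR⟩
    exact hcard ▸ hH.card_lt_two_pow_index hne
  exact ⟨T, hST, hTL, hTR, isLeftTransversal_of_leftDistinct hTL hTcard,
    isRightTransversal_of_rightDistinct hTR hTcard⟩
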